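/- Let ε ∈ [0, 1/2) and set δ = 1/2 - ε. Suppose U is a unitary on ℂ² ⊗ (ℂ²)^{⊗N} such that for all unit (α,β) ∈ ℂ², |⟨α,β| U |α,β;0⟩|² ≥ 1-ε, where |α,β;0⟩ = (α|0⟩+β|1⟩)⊗|0...0⟩ and |α,β⟩ = α|0...0⟩_{all} + β|1...1⟩_{all}. Then |⟨0,1|[U X₀ U†, Z₁]|1,0⟩| ≥ 2(1-2ε) = 4δ. -/

import Mathlib

open Matrix

/-- A single-qubit operator `A` acting on qubit `i` of `N+1` qubits. -/
noncomputable def siteOp (N : ℕ) (i : Fin (N + 1)) (A : Matrix (Fin 2) (Fin 2) ℂ) :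
    Matrix (Fin (N + 1) → Fin 2) (Fin (N + 1) → Fin 2) ℂ := fun s t =>
  if ∀ j, j ≠ i → s j = t j then A (s i) (t i) else 0

noncomputable def pauliX : Matrix (Fin 2) (Fin 2) ℂ := !![0, 1; 1, 0]
noncomputable def pauliZ : Matrix (Fin 2) (Fin 2) ℂ := !![1, 0; 0, -1]

/-- The pre-encoding state `|α,β;0⟩ = (α|0⟩+β|1⟩)₀ ⊗ |0...0⟩`. -/
noncomputable def initState (N : ℕ) (α β : ℂ) : (Fin (N + 1) → Fin 2) → ℂ := fun s =>
  if ∀ i, i ≠ 0 → s i = 0 then (if s 0 = 0 then α else β) else 0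

/-- The encoded GHZ-subspace state `|α,β⟩ = α|0...0⟩ + β|1...1⟩`. -/
noncomputable def ghzState (N : ℕ) (α β : ℂ) : (Fin (N + 1) → Fin 2) → ℂ := fun s =>
  (if ∀ i, s i = 0 then α else 0) + (if ∀ i, s i = 1 then β else 0)

open scoped ComplexInnerProductSpace


lemma perp_norm_sq {E : Type*} [NormedAddCommGroup E] [InnerProductSpace ℂ E]
    (a v : E) (ha : ‖a‖ = 1) (hv : ‖v‖ = 1) :
    ‖a - ⟪v, a⟫ • v‖ ^ 2 = 1 - ‖⟪v, a⟫‖ ^ 2 := by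
  set p : ℂ := ⟪v, a⟫ with hpdef
  have hvv : ⟪v, v⟫ = 1 := by simp [inner_self_eq_norm_sq_to_K, hv]
  have h1 : ⟪a - p • v, a - p • v⟫ = 1 - (starRingEnd ℂ p) * p := by
    rw [inner_sub_sub_self, inner_smul_left, inner_smul_right, inner_smul_left,
      inner_smul_right, hvv, ← hpdef, ← inner_conj_symm a v, ← hpdef,
      inner_self_eq_norm_sq_to_K, ha]
    push_cast
    ring
  have h2 : RCLike.re ⟪a - p • v, a - p • v⟫ = 1 - ‖p‖ ^ 2 := by
    rw [h1]
    have : (starRingEnd ℂ p) * p = ((‖p‖ ^ 2 : ℝ) : ℂ) := by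
      rw [mul_comm, Complex.mul_conj, ← Complex.sq_norm]
    rw [this]
    norm_cast
  rw [← inner_self_eq_norm_sq (𝕜 := ℂ)]
  exact h2

lemma ghz_core {E : Type*} [NormedAddCommGroup E] [InnerProductSpace ℂ E]
    (T : E →ₗ[ℂ] E) (hT : ∀ x y : E, ⟪T x, T y⟫ = ⟪x, y⟫)
    (hTh : ∀ x y : E, ⟪T x, y⟫ = ⟪x, T y⟫)
    (a b v w : E) (ha : ‖a‖ = 1) (hb : ‖b‖ = 1) (hv : ‖v‖ = 1) (hw : ‖w‖ = 1)
    (hTv : T v = w) (hTw : T w = v) (ε : ℝ) (hε : 0 ≤ ε)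
    (hp : 1 - ε ≤ ‖⟪a, v⟫‖ ^ 2) (hq : 1 - ε ≤ ‖⟪b, w⟫‖ ^ 2) :
    1 - 2 * ε ≤ ‖⟪b, T a⟫‖ := by
  set p : ℂ := ⟪v, a⟫ with hpdef
  set q : ℂ := ⟪w, b⟫ with hqdef
  set a' : E := a - p • v with ha'
  set b' : E := b - q • w with hb'
  have hvv : ⟪v, v⟫ = 1 := by simp [inner_self_eq_norm_sq_to_K, hv]
  have hww : ⟪w, w⟫ = 1 := by simp [inner_self_eq_norm_sq_to_K, hw]
  have hva' : ⟪v, a'⟫ = 0 := by simp [ha', inner_sub_right, inner_smul_right, hvv, hv, ← hpdef]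
  have hpnorm : 1 - ε ≤ ‖p‖ ^ 2 := by rw [hpdef, norm_inner_symm]; exact hp
  have hqnorm : 1 - ε ≤ ‖q‖ ^ 2 := by rw [hqdef, norm_inner_symm]; exact hq
  have hna : ‖a'‖ ^ 2 ≤ ε := by
    rw [ha', hpdef, perp_norm_sq a v ha hv, norm_inner_symm]; linarith
  have hnb : ‖b'‖ ^ 2 ≤ ε := by
    rw [hb', hqdef, perp_norm_sq b w hb hw, norm_inner_symm]; linarith
  have hdecomp : ⟪b, T a⟫ = p * (starRingEnd ℂ q) + ⟪b', T a'⟫ := by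
    have hTa : T a = T a' + p • w := by
      rw [ha']; simp [map_sub, _root_.map_smul, hTv]
    have h1 : ⟪b, T a⟫ = ⟪b, T a'⟫ + p * ⟪b, w⟫ := by
      rw [hTa, inner_add_right, inner_smul_right]
    have h3 : ⟪w, T a'⟫ = 0 := by rw [← hTh w a', hTw]; exact hva'
    have h2 : ⟪b, T a'⟫ = ⟪b', T a'⟫ := by
      have hbdec : b = b' + q • w := by rw [hb']; abel
      conv_lhs => rw [hbdec]
      rw [inner_add_left, inner_smul_left, h3]
      ring
    have h4 : ⟪b, w⟫ = starRingEnd ℂ q := by rw [hqdef, ← inner_conj_symm]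
    rw [h1, h2, h4]
    ring
  have hTa' : ‖T a'‖ = ‖a'‖ := by
    have h5 : RCLike.re ⟪T a', T a'⟫ = RCLike.re ⟪a', a'⟫ := by rw [hT]
    rw [inner_self_eq_norm_sq (𝕜 := ℂ), inner_self_eq_norm_sq (𝕜 := ℂ)] at h5
    exact (pow_left_inj₀ (norm_nonneg _) (norm_nonneg _) two_ne_zero).mp h5
  have herr : ‖⟪b', T a'⟫‖ ≤ ε := by
    have h6 : ‖⟪b', T a'⟫‖ ≤ ‖b'‖ * ‖T a'‖ := norm_inner_le_norm _ _
    rw [hTa'] at h6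
    nlinarith [norm_nonneg a', norm_nonneg b', sq_nonneg (‖a'‖ - ‖b'‖)]
  have hmain : 1 - ε ≤ ‖p * starRingEnd ℂ q‖ := by
    rw [norm_mul, RCLike.norm_conj]
    nlinarith [mul_nonneg (norm_nonneg p) (norm_nonneg q),
      mul_nonneg (by linarith : (0:ℝ) ≤ ‖p‖ ^ 2 - (1 - ε)) (by linarith : (0:ℝ) ≤ ‖q‖ ^ 2 - (1 - ε)),
      norm_nonneg p, norm_nonneg q]
  have htri : ‖p * starRingEnd ℂ q‖ ≤ ‖⟪b, T a⟫‖ + ‖⟪b', T a'⟫‖ := by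
    calc ‖p * starRingEnd ℂ q‖ = ‖⟪b, T a⟫ - ⟪b', T a'⟫‖ := by rw [hdecomp]; ring_nf
    _ ≤ ‖⟪b, T a⟫‖ + ‖⟪b', T a'⟫‖ := norm_sub_le _ _
  linarith


-- sum over states with fixed off-site values
lemma sum_site {N : ℕ} (i : Fin (N + 1)) (s : Fin (N + 1) → Fin 2) (g : Fin 2 → ℂ) :
    (∑ r : Fin (N + 1) → Fin 2, if ∀ j, j ≠ i → s j = r j then g (r i) else 0)
      = ∑ k : Fin 2, g k := by
  rw [← Finset.sum_filter]
  have himg : Finset.univ.filter (fun r : Fin (N+1) → Fin 2 => ∀ j, j ≠ i → s j = r j)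
      = Finset.image (fun k => Function.update s i k) Finset.univ := by
    ext r
    simp only [Finset.mem_filter, Finset.mem_univ, true_and, Finset.mem_image]
    constructor
    · intro h
      refine ⟨r i, funext fun j => ?_⟩
      by_cases hj : j = i
      · subst hj; simp
      · rw [Function.update_of_ne hj]; exact h j hj
    · rintro ⟨k, rfl⟩ j hj
      rw [Function.update_of_ne hj]
  rw [himg, Finset.sum_image]
  · simp
  · intro k _ k' _ h
    have := congrFun h i
    simpa using this

lemma siteOp_mul {N : ℕ} (i : Fin (N + 1)) (A B : Matrix (Fin 2) (Fin 2) ℂ) :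
    siteOp N i A * siteOp N i B = siteOp N i (A * B) := by
  ext s t
  simp only [Matrix.mul_apply, siteOp, ite_mul, zero_mul, mul_ite, mul_zero]
  by_cases hst : ∀ j, j ≠ i → s j = t j
  · rw [if_pos hst]
    have key : ∀ r : Fin (N + 1) → Fin 2,
        (if ∀ j, j ≠ i → r j = t j then (if ∀ j, j ≠ i → s j = r j
          then A (s i) (r i) * B (r i) (t i) else 0) else 0)
        = (if ∀ j, j ≠ i → s j = r j then A (s i) (r i) * B (r i) (t i) else 0) := by
      intro r
      by_cases h1 : ∀ j, j ≠ i → s j = r j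
      · rw [if_pos (fun j hj => ((h1 j hj).symm).trans (hst j hj)), if_pos h1]
      · by_cases h2 : ∀ j, j ≠ i → r j = t j
        · rw [if_pos h2, if_neg h1]
        · rw [if_neg h2, if_neg h1]
    rw [Finset.sum_congr rfl (fun r _ => key r), sum_site i s (fun k => A (s i) k * B k (t i))]
  · rw [if_neg hst, Finset.sum_eq_zero]
    intro r _
    by_cases h1 : ∀ j, j ≠ i → s j = r j
    · by_cases h2 : ∀ j, j ≠ i → r j = t j
      · exact absurd (fun j hj => (h1 j hj).trans (h2 j hj)) hst
      · rw [if_neg h2]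
    · by_cases h2 : ∀ j, j ≠ i → r j = t j
      · rw [if_pos h2, if_neg h1]
      · rw [if_neg h2]

lemma siteOp_conjT {N : ℕ} (i : Fin (N + 1)) (A : Matrix (Fin 2) (Fin 2) ℂ)
    (hA : Aᴴ = A) : (siteOp N i A)ᴴ = siteOp N i A := by
  ext s t
  simp only [conjTranspose_apply, siteOp]
  by_cases h : ∀ j, j ≠ i → s j = t j
  · rw [if_pos (fun j hj => (h j hj).symm), if_pos h]
    have : star (A (t i) (s i)) = Aᴴ (s i) (t i) := rfl
    rw [this, hA]
  · rw [if_neg (fun hc => h (fun j hj => (hc j hj).symm)), if_neg h, star_zero]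

lemma siteOp_mulVec_ind {N : ℕ} (i : Fin (N + 1)) (A : Matrix (Fin 2) (Fin 2) ℂ)
    (t0 : Fin (N + 1) → Fin 2) :
    siteOp N i A *ᵥ (fun t => if t = t0 then 1 else 0)
      = fun s => if ∀ j, j ≠ i → s j = t0 j then A (s i) (t0 i) else 0 := by
  funext s
  simp only [Matrix.mulVec, dotProduct, mul_ite, mul_one, mul_zero]
  rw [Finset.sum_ite_eq' Finset.univ t0 (fun t => siteOp N i A s t)]
  simp [siteOp]

lemma pauliX_mul_pauliX : pauliX * pauliX = 1 := by
  ext i j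
  fin_cases i <;> fin_cases j <;>
    simp [pauliX, Matrix.mul_apply, Fin.sum_univ_two, Matrix.one_apply]

lemma pauliX_conjT : pauliXᴴ = pauliX := by
  ext i j
  fin_cases i <;> fin_cases j <;> simp [pauliX]

lemma pauliZ_conjT : pauliZᴴ = pauliZ := by
  ext i j
  fin_cases i <;> fin_cases j <;> simp [pauliZ]

lemma siteOp_one {N : ℕ} (i : Fin (N + 1)) : siteOp N i (1 : Matrix (Fin 2) (Fin 2) ℂ) = 1 := by
  ext s t
  simp only [siteOp, Matrix.one_apply]
  by_cases h : ∀ j, j ≠ i → s j = t j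
  · rw [if_pos h]
    by_cases h2 : s i = t i
    · rw [if_pos h2, if_pos]
      funext j
      by_cases hj : j = i
      · rw [hj]; exact h2
      · exact h j hj
    · rw [if_neg h2, if_neg]
      intro hc; exact h2 (congrFun hc i)
  · rw [if_neg h, if_neg]
    intro hc
    exact h (fun j _ => congrFun hc j)

-- the basis states
abbrev allZero (N : ℕ) : Fin (N + 1) → Fin 2 := fun _ => 0
abbrev allOne (N : ℕ) : Fin (N + 1) → Fin 2 := fun _ => 1
abbrev oneZero (N : ℕ) : Fin (N + 1) → Fin 2 := fun i => if i = 0 then 1 else 0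

lemma ghz10_eq (N : ℕ) : ghzState N 1 0 = fun s => if s = allZero N then 1 else 0 := by
  funext s
  simp only [ghzState, allZero, ite_self, add_zero, funext_iff]

lemma ghz01_eq (N : ℕ) : ghzState N 0 1 = fun s => if s = allOne N then 1 else 0 := by
  funext s
  simp only [ghzState, allOne, ite_self, zero_add, funext_iff]

lemma init10_eq (N : ℕ) : initState N 1 0 = fun s => if s = allZero N then 1 else 0 := by
  funext s
  simp only [initState, allZero, funext_iff]
  by_cases h : ∀ i, s i = 0
  · rw [if_pos (fun i _ => h i), if_pos (h 0), if_pos h]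
  · rw [if_neg h]
    by_cases h1 : ∀ i, i ≠ 0 → s i = 0
    · rw [if_pos h1]
      have h0 : s 0 ≠ 0 := by
        intro hc
        refine h (fun i => ?_)
        by_cases hi : i = 0
        · rw [hi]; exact hc
        · exact h1 i hi
      rw [if_neg h0]
    · rw [if_neg h1]

lemma init01_eq (N : ℕ) : initState N 0 1 = fun s => if s = oneZero N then 1 else 0 := by
  funext s
  simp only [initState, oneZero, funext_iff]
  by_cases h : ∀ i, s i = if i = 0 then 1 else 0
  · have h1 : ∀ i, i ≠ 0 → s i = 0 := fun i hi => by rw [h i, if_neg hi]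
    have h0 : s 0 ≠ 0 := by rw [h 0]; simp
    rw [if_pos h1, if_neg h0, if_pos h]
  · rw [if_neg h]
    by_cases h1 : ∀ i, i ≠ 0 → s i = 0
    · rw [if_pos h1]
      have h0 : s 0 = 0 := by
        by_contra h0
        apply h
        intro i
        by_cases hi : i = 0
        · rw [hi, if_pos rfl]; omega
        · rw [if_neg hi]; exact h1 i hi
      rw [if_pos h0]
    · rw [if_neg h1]

lemma fin2_cases (k : Fin 2) : k = 0 ∨ k = 1 := by
  fin_cases k <;> simp

lemma X0_act_zero (N : ℕ) :
    siteOp N 0 pauliX *ᵥ (fun t => if t = allZero N then 1 else 0)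
      = fun s => if s = oneZero N then 1 else 0 := by
  rw [siteOp_mulVec_ind]
  funext s
  simp only [allZero, oneZero, funext_iff]
  by_cases h : ∀ j, j ≠ 0 → s j = 0
  · rw [if_pos h]
    rcases fin2_cases (s 0) with h0 | h0
    · rw [h0]
      have : pauliX 0 0 = 0 := by simp [pauliX]
      rw [this, if_neg]
      intro hc
      have := hc 0
      rw [if_pos rfl, h0] at this
      exact absurd this (by decide)
    · rw [h0]
      have : pauliX 1 0 = 1 := by simp [pauliX]
      rw [this, if_pos]
      intro i
      by_cases hi : i = 0
      · rw [hi, if_pos rfl]; exact h0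
      · rw [if_neg hi]; exact h i hi
  · rw [if_neg h, if_neg]
    intro hc
    apply h
    intro j hj
    rw [hc j, if_neg hj]

lemma X0_act_one (N : ℕ) :
    siteOp N 0 pauliX *ᵥ (fun t => if t = oneZero N then 1 else 0)
      = fun s => if s = allZero N then 1 else 0 := by
  rw [siteOp_mulVec_ind]
  funext s
  simp only [allZero, oneZero, funext_iff]
  have hoz : ∀ j : Fin (N+1), j ≠ 0 → (if j = 0 then (1 : Fin 2) else 0) = 0 := by
    intro j hj; rw [if_neg hj]
  by_cases h : ∀ j, j ≠ 0 → s j = if j = 0 then (1:Fin 2) else 0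
  · rw [if_pos h]
    rw [if_pos trivial]
    rcases fin2_cases (s 0) with h0 | h0
    · rw [h0]
      have : pauliX 0 1 = 1 := by simp [pauliX]
      rw [this, if_pos]
      intro i
      by_cases hi : i = 0
      · rw [hi]; exact h0
      · rw [(h i hi), if_neg hi]
    · rw [h0]
      have : pauliX 1 1 = 0 := by simp [pauliX]
      rw [this, if_neg]
      intro hc
      have := hc 0
      rw [h0] at this
      exact absurd this (by decide)
  · rw [if_neg h, if_neg]
    intro hc
    apply h
    intro j hj
    rw [hc j, if_neg hj]

lemma Z1_act_zero (N : ℕ) (i1 : Fin (N + 1)) :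
    siteOp N i1 pauliZ *ᵥ (fun t => if t = allZero N then 1 else 0)
      = fun s => if s = allZero N then 1 else 0 := by
  rw [siteOp_mulVec_ind]
  funext s
  simp only [allZero, funext_iff]
  by_cases h : ∀ j, j ≠ i1 → s j = 0
  · rw [if_pos h]
    rcases fin2_cases (s i1) with h0 | h0
    · rw [h0]
      have : pauliZ 0 0 = 1 := by simp [pauliZ]
      rw [this, if_pos]
      intro i
      by_cases hi : i = i1
      · rw [hi]; exact h0
      · exact h i hi
    · rw [h0]
      have : pauliZ 1 0 = 0 := by simp [pauliZ]
      rw [this, if_neg]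
      intro hc
      have := hc i1
      rw [h0] at this
      exact absurd this (by decide)
  · rw [if_neg h, if_neg]
    intro hc
    exact h (fun j _ => hc j)

lemma Z1_act_one (N : ℕ) (i1 : Fin (N + 1)) :
    siteOp N i1 pauliZ *ᵥ (fun t => if t = allOne N then 1 else 0)
      = fun s => -(if s = allOne N then 1 else 0) := by
  rw [siteOp_mulVec_ind]
  funext s
  simp only [allOne, funext_iff]
  by_cases h : ∀ j, j ≠ i1 → s j = 1
  · rw [if_pos h]
    rcases fin2_cases (s i1) with h0 | h0
    · have hno : ¬ ∀ x, s x = 1 := by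
        intro hc
        have := hc i1
        rw [h0] at this
        exact absurd this (by decide)
      rw [h0, if_neg hno]
      simp [pauliZ]
    · have hyes : ∀ x, s x = 1 := by
        intro i
        by_cases hi : i = i1
        · rw [hi]; exact h0
        · exact h i hi
      rw [h0, if_pos hyes]
      simp [pauliZ]
  · have hno : ¬ ∀ x, s x = 1 := fun hc => h (fun j _ => hc j)
    rw [if_neg h, if_neg hno]
    ring


lemma inner_dot {n : Type*} [Fintype n] (x y : EuclideanSpace ℂ n) :
    (inner (𝕜 := ℂ) (E := EuclideanSpace ℂ n) x y) = star (WithLp.ofLp x) ⬝ᵥ (WithLp.ofLp y) := by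
  simp [PiLp.inner_apply, dotProduct, RCLike.inner_apply, Pi.star_apply, mul_comm]

lemma dot_ind_self {n : Type*} [Fintype n] [DecidableEq n] (t0 : n) :
    star (fun t => if t = t0 then (1:ℂ) else 0) ⬝ᵥ (fun t => if t = t0 then (1:ℂ) else 0)
      = 1 := by
  simp only [dotProduct, Pi.star_apply]
  rw [Finset.sum_eq_single t0]
  · simp
  · intro b _ hb; simp [hb]
  · simp

lemma dot_unitary {n : Type*} [Fintype n] [DecidableEq n]
    (U : Matrix n n ℂ) (hU : Uᴴ * U = 1) (x y : n → ℂ) :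
    star (U *ᵥ x) ⬝ᵥ (U *ᵥ y) = star x ⬝ᵥ y := by
  rw [Matrix.star_mulVec, dotProduct_mulVec, Matrix.vecMul_vecMul, hU,
    Matrix.vecMul_one]

lemma norm_of_dot_one {n : Type*} [Fintype n] (x : EuclideanSpace ℂ n)
    (hx : star (WithLp.ofLp x) ⬝ᵥ (WithLp.ofLp x) = 1) : ‖x‖ = 1 := by
  have h2 : ‖x‖ ^ 2 = 1 := by
    rw [← inner_self_eq_norm_sq (𝕜 := ℂ), inner_dot, hx]
    simp
  have := norm_nonneg x
  nlinarith

/-- Key step of the lower-bound proof: approximate GHZ encoding with infidelity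
`ε = 1/2 - δ` forces the matrix element
`|⟨0,1| [U X₀ U†, Z₁] |1,0⟩| ≥ 2(1-2ε) = 4δ`. -/
theorem ghz_encoding_commutator_bound (N : ℕ) (hN : 1 ≤ N)
    (ε δ : ℝ) (hε0 : 0 ≤ ε) (hε : ε < 1 / 2) (hδ : δ = 1 / 2 - ε)
    (U : Matrix (Fin (N + 1) → Fin 2) (Fin (N + 1) → Fin 2) ℂ)
    (hU : U ∈ Matrix.unitaryGroup (Fin (N + 1) → Fin 2) ℂ)
    (hfid : ∀ α β : ℂ, ‖α‖ ^ 2 + ‖β‖ ^ 2 = 1 →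
      1 - ε ≤ ‖(star (ghzState N α β) ⬝ᵥ (U *ᵥ initState N α β))‖ ^ 2) :
    4 * δ ≤ ‖(star (ghzState N 0 1) ⬝ᵥ
      (((U * siteOp N 0 pauliX * Uᴴ) * siteOp N 1 pauliZ -
        siteOp N 1 pauliZ * (U * siteOp N 0 pauliX * Uᴴ)) *ᵥ ghzState N 1 0))‖ := by
  classical
  set fa : (Fin (N+1) → Fin 2) → ℂ := fun s => if s = allZero N then 1 else 0 with hfa
  set fb : (Fin (N+1) → Fin 2) → ℂ := fun s => if s = allOne N then 1 else 0 with hfb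
  set fu : (Fin (N+1) → Fin 2) → ℂ := fun s => if s = oneZero N then 1 else 0 with hfu
  set X0 := siteOp N 0 pauliX with hX0
  set Z1 := siteOp N 1 pauliZ with hZ1
  set B := U * X0 * Uᴴ with hB
  have hUU1 : Uᴴ * U = 1 := by
    have := (Matrix.mem_unitaryGroup_iff').mp hU
    rwa [Matrix.star_eq_conjTranspose] at this
  have hUU2 : U * Uᴴ = 1 := by
    have := (Matrix.mem_unitaryGroup_iff).mp hU
    rwa [Matrix.star_eq_conjTranspose] at this
  have hX0H : X0ᴴ = X0 := siteOp_conjT 0 pauliX pauliX_conjT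
  have hZ1H : Z1ᴴ = Z1 := siteOp_conjT 1 pauliZ pauliZ_conjT
  have hX0sq : X0 * X0 = 1 := by
    rw [hX0, siteOp_mul, pauliX_mul_pauliX, siteOp_one]
  have hBH : Bᴴ = B := by
    rw [hB, Matrix.conjTranspose_mul, Matrix.conjTranspose_mul,
      Matrix.conjTranspose_conjTranspose, hX0H, Matrix.mul_assoc]
  have hBB : B * B = 1 := by
    rw [hB]
    have h1 : U * X0 * Uᴴ * (U * X0 * Uᴴ) = U * X0 * (Uᴴ * U) * X0 * Uᴴ := by
      simp only [Matrix.mul_assoc]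
    rw [h1, hUU1, Matrix.mul_one, Matrix.mul_assoc U X0 X0, hX0sq, Matrix.mul_one, hUU2]
  -- commutator reduction
  rw [ghz01_eq, ghz10_eq, ← hfa, ← hfb]
  have hZa : Z1 *ᵥ fa = fa := by rw [hZ1, hfa, Z1_act_zero]
  have hZb : Z1 *ᵥ fb = -fb := by
    rw [hZ1, hfb, Z1_act_one]
    funext s
    simp
  have hcomm : star fb ⬝ᵥ ((B * Z1 - Z1 * B) *ᵥ fa) = 2 * (star fb ⬝ᵥ (B *ᵥ fa)) := by
    rw [Matrix.sub_mulVec, dotProduct_sub]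
    have h1 : (B * Z1) *ᵥ fa = B *ᵥ fa := by
      rw [← Matrix.mulVec_mulVec, hZa]
    have hzvec : star fb ᵥ* Z1 = -(star fb) := by
      have h3 := congrArg star hZb
      rw [Matrix.star_mulVec, hZ1H, star_neg] at h3
      exact h3
    have h2 : star fb ⬝ᵥ ((Z1 * B) *ᵥ fa) = -(star fb ⬝ᵥ (B *ᵥ fa)) := by
      rw [← Matrix.mulVec_mulVec, dotProduct_mulVec, hzvec, neg_dotProduct]

    rw [h1, h2]
    ring
  rw [hcomm, norm_mul]
  have habs2 : ‖(2 : ℂ)‖ = 2 := by simp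
  rw [habs2]
  -- set up euclidean space
  set v : (Fin (N+1) → Fin 2) → ℂ := U *ᵥ fa with hv
  set w : (Fin (N+1) → Fin 2) → ℂ := U *ᵥ fu with hw
  set T : EuclideanSpace ℂ (Fin (N+1) → Fin 2) →ₗ[ℂ] EuclideanSpace ℂ (Fin (N+1) → Fin 2) :=
    { toFun := fun x => WithLp.toLp 2 (B *ᵥ WithLp.ofLp x)
      map_add' := fun x y => by simp [Matrix.mulVec_add]
      map_smul' := fun c x => by simp [Matrix.mulVec_smul] } with hT
  have hTapp : ∀ x : EuclideanSpace ℂ (Fin (N+1) → Fin 2), T x = WithLp.toLp 2 (B *ᵥ WithLp.ofLp x) := fun _ => rfl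
  have hBdot : ∀ x y : (Fin (N+1) → Fin 2) → ℂ,
      star (B *ᵥ x) ⬝ᵥ (B *ᵥ y) = star x ⬝ᵥ y := by
    intro x y
    apply dot_unitary B _ x y
    rw [hBH, hBB]
  have hTinner : ∀ x y : EuclideanSpace ℂ (Fin (N+1) → Fin 2), ⟪T x, T y⟫ = ⟪x, y⟫ := by
    intro x y
    rw [hTapp, hTapp, inner_dot, inner_dot, WithLp.ofLp_toLp, WithLp.ofLp_toLp, hBdot]
  have hTherm : ∀ x y : EuclideanSpace ℂ (Fin (N+1) → Fin 2), ⟪T x, y⟫ = ⟪x, T y⟫ := by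
    intro x y
    rw [hTapp, hTapp, inner_dot, inner_dot, WithLp.ofLp_toLp, WithLp.ofLp_toLp, Matrix.star_mulVec, hBH,
      ← dotProduct_mulVec]
  have hXa : X0 *ᵥ fa = fu := by rw [hX0, hfa, hfu, X0_act_zero]
  have hXu : X0 *ᵥ fu = fa := by rw [hX0, hfa, hfu, X0_act_one]
  have hTv : T (WithLp.toLp 2 v : EuclideanSpace ℂ (Fin (N+1) → Fin 2)) = WithLp.toLp 2 w := by
    rw [hTapp, WithLp.ofLp_toLp, hv, hw, Matrix.mulVec_mulVec, hB]
    have h1 : U * X0 * Uᴴ * U = U * X0 * (Uᴴ * U) := by simp only [Matrix.mul_assoc]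
    rw [h1, hUU1, Matrix.mul_one, ← Matrix.mulVec_mulVec, hXa]
  have hTw : T (WithLp.toLp 2 w : EuclideanSpace ℂ (Fin (N+1) → Fin 2)) = WithLp.toLp 2 v := by
    rw [hTapp, WithLp.ofLp_toLp, hv, hw, Matrix.mulVec_mulVec, hB]
    have h1 : U * X0 * Uᴴ * U = U * X0 * (Uᴴ * U) := by simp only [Matrix.mul_assoc]
    rw [h1, hUU1, Matrix.mul_one, ← Matrix.mulVec_mulVec, hXu]
  have hna := norm_of_dot_one (x := (WithLp.toLp 2 fa : EuclideanSpace ℂ (Fin (N+1) → Fin 2))) (dot_ind_self (allZero N))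
  have hnb := norm_of_dot_one (x := (WithLp.toLp 2 fb : EuclideanSpace ℂ (Fin (N+1) → Fin 2))) (dot_ind_self (allOne N))
  have hnv := norm_of_dot_one (x := (WithLp.toLp 2 v : EuclideanSpace ℂ (Fin (N+1) → Fin 2))) (by
      show star (U *ᵥ fa) ⬝ᵥ (U *ᵥ fa) = 1
      rw [dot_unitary U hUU1]
      exact dot_ind_self _)
  have hnw := norm_of_dot_one (x := (WithLp.toLp 2 w : EuclideanSpace ℂ (Fin (N+1) → Fin 2))) (by
      show star (U *ᵥ fu) ⬝ᵥ (U *ᵥ fu) = 1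
      rw [dot_unitary U hUU1]
      exact dot_ind_self _)
  have hp : 1 - ε ≤ ‖inner (𝕜 := ℂ) (E := EuclideanSpace ℂ (Fin (N+1) → Fin 2)) (WithLp.toLp 2 fa) (WithLp.toLp 2 v)‖ ^ 2 := by
    have h := hfid 1 0 (by simp)
    rw [ghz10_eq, init10_eq] at h
    rw [inner_dot]
    exact h
  have hq : 1 - ε ≤ ‖inner (𝕜 := ℂ) (E := EuclideanSpace ℂ (Fin (N+1) → Fin 2)) (WithLp.toLp 2 fb) (WithLp.toLp 2 w)‖ ^ 2 := by
    have h := hfid 0 1 (by simp)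
    rw [ghz01_eq, init01_eq] at h
    rw [inner_dot]
    exact h
  have hcore := ghz_core T hTinner hTherm (WithLp.toLp 2 fa) (WithLp.toLp 2 fb) (WithLp.toLp 2 v) (WithLp.toLp 2 w) hna hnb hnv hnw hTv hTw ε hε0 hp hq
  rw [hTapp, inner_dot] at hcore
  simp only [WithLp.ofLp_toLp] at hcore
  rw [hδ]
  linarith
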